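/- Let X1, X2, X3 be iid St. Petersburg lotteries. Then P((X1 + X2 + X3)/3 < 8) = 195/256 > 3/4 = P(X1 < 8); consequently X1 ≤_st (X1+X2+X3)/3 fails. -/

import Mathlib

open MeasureTheory ProbabilityTheory Real Finset

noncomputable section

variable {Ω : Type*} [MeasurableSpace Ω]

/-- `X ~ Pareto(α)` : cdf `1 - x^(-α)` for `x ≥ 1`. -/
def IsPareto (P : Measure Ω) (α : ℝ) (X : Ω → ℝ) : Prop :=
  Measurable X ∧ (∀ x : ℝ, 1 ≤ x → P {ω | x < X ω} = ENNReal.ofReal (x ^ (-α))) ∧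
    P {ω | X ω < 1} = 0

/-- the increasing rearrangement of a vector -/
def sortedVec {n : ℕ} (f : Fin n → ℝ) : Fin n → ℝ := f ∘ Tuple.sort f

/-- `MajorizedBy θ η` : `θ ⪯ η`, i.e. equal sums and the sum of the `k` smallest
components of `θ` is at least that of `η` for each `k`. -/
def MajorizedBy {n : ℕ} (θ η : Fin n → ℝ) : Prop :=
  (∑ i, θ i = ∑ i, η i) ∧
  ∀ k : ℕ, k ≤ n →
    ∑ i ∈ Finset.univ.filter (fun i : Fin n => (i : ℕ) < k), sortedVec η i ≤
    ∑ i ∈ Finset.univ.filter (fun i : Fin n => (i : ℕ) < k), sortedVec θ i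

/-- St. Petersburg lottery: takes value `2^k` with probability `2^(-k)` for `k ≥ 1`. -/
def IsStPetersburg (P : Measure Ω) (X : Ω → ℝ) : Prop :=
  Measurable X ∧ ∀ k : ℕ, 1 ≤ k → P {ω | X ω = 2 ^ k} = ((2 : ENNReal) ^ k)⁻¹

open scoped ENNReal

/-! Almost surely a St. Petersburg lottery equals `2 ^ (k + 1)` for some `k : ℕ`, so an event
described by the values of `X₁, X₂, X₃` is, up to a null set, a disjoint union of atoms whose
probabilities multiply by independence. Moreover `X₁ + X₂ + X₃` is a.s. a natural number, so
`(X₁ + X₂ + X₃) / 3 ≤ 23 / 3` has the same probability `195 / 256` as `(X₁ + X₂ + X₃) / 3 < 8`,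
while `X₁ ≤ 23 / 3` has the same probability `3 / 4` as `X₁ < 8`: dominance fails at `x = 23 / 3`. -/

lemma pairwise_disjoint_preimage_two_pow_succ {α : Type*} (f : α → ℝ) :
    Pairwise (Function.onFun Disjoint fun k : ℕ => f ⁻¹' {2 ^ (k + 1)}) := by
  intro i j hij
  refine Set.disjoint_left.2 fun a hi hj => hij ?_
  simpa using (Set.mem_singleton_iff.1 hi).symm.trans hj

namespace IsStPetersburg

variable {P : Measure Ω} {X : Ω → ℝ}

lemma measurableSet_preimage_two_pow (h : IsStPetersburg P X) (k : ℕ) :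
    MeasurableSet (X ⁻¹' {2 ^ k}) :=
  h.1 (measurableSet_singleton _)

lemma measure_preimage_two_pow_succ (h : IsStPetersburg P X) (k : ℕ) :
    P (X ⁻¹' {2 ^ (k + 1)}) = 2⁻¹ ^ (k + 1) := by
  rw [← ENNReal.inv_pow]
  exact h.2 (k + 1) k.succ_pos

lemma ae_exists_eq_two_pow_succ [IsProbabilityMeasure P] (h : IsStPetersburg P X) :
    ∀ᵐ ω ∂P, ∃ k : ℕ, X ω = 2 ^ (k + 1) := by
  have hmeas : ∀ k : ℕ, MeasurableSet (X ⁻¹' {2 ^ (k + 1)}) :=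
    fun k => h.measurableSet_preimage_two_pow _
  have hfull : P (⋃ k : ℕ, X ⁻¹' {2 ^ (k + 1)}) = P Set.univ := by
    rw [measure_iUnion (pairwise_disjoint_preimage_two_pow_succ X) hmeas]
    simp_rw [h.measure_preimage_two_pow_succ, ENNReal.tsum_geometric_add_one, ENNReal.one_sub_inv_two,
      inv_inv, measure_univ]
    exact ENNReal.inv_mul_cancel two_ne_zero ENNReal.ofNat_ne_top
  filter_upwards [(ae_mem_iff_measure_eq (MeasurableSet.iUnion hmeas).nullMeasurableSet).2 hfull]
    with ω hω
  simpa using hω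

lemma measure_preimage_eq_sum [IsProbabilityMeasure P]
    (h : IsStPetersburg P X) {s : Set ℝ} (K : Finset ℕ) (hK : ∀ k, 2 ^ (k + 1) ∈ s ↔ k ∈ K) :
    P (X ⁻¹' s) = ∑ k ∈ K, 2⁻¹ ^ (k + 1) := by
  have hae : X ⁻¹' s =ᵐ[P] ⋃ k ∈ K, X ⁻¹' {2 ^ (k + 1)} := by
    refine Filter.eventuallyEq_set.2 ?_
    filter_upwards [h.ae_exists_eq_two_pow_succ] with ω ⟨k, hk⟩
    simp [hk, hK]
  rw [measure_congr hae, measure_biUnion_finset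
    ((pairwise_disjoint_preimage_two_pow_succ X).set_pairwise _) fun k _ => h.measurableSet_preimage_two_pow _]
  exact sum_congr rfl fun k _ => h.measure_preimage_two_pow_succ k

lemma measure_preimage_eq_three_div_four [IsProbabilityMeasure P]
    (h : IsStPetersburg P X) {s : Set ℝ} (hs : ∀ n : ℕ, (n : ℝ) ∈ s ↔ n < 8) :
    P (X ⁻¹' s) = 3 / 4 := by
  have hK : ∀ k, (2 : ℝ) ^ (k + 1) ∈ s ↔ k ∈ range 2 := fun k => by
    have hk : 2 ^ (k + 1) < 8 ↔ k < 2 := by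
      rw [show 8 = 2 ^ 3 from rfl, Nat.pow_lt_pow_iff_right one_lt_two]
      omega
    rw [mem_range, ← hk, ← hs]
    push_cast
    rfl
  rw [h.measure_preimage_eq_sum (range 2) hK,
    ← ENNReal.toReal_eq_toReal_iff' (ENNReal.sum_ne_top.2 fun _ _ => by finiteness) (by finiteness),
    ENNReal.toReal_sum fun _ _ => by finiteness]
  norm_num [sum_range_succ, ENNReal.toReal_div]

end IsStPetersburg

lemma ProbabilityTheory.iIndepFun.measure_inter_preimage_eq_mul_three {β : Type*}
    [MeasurableSpace β] {P : Measure Ω} {X₁ X₂ X₃ : Ω → β} (hind : iIndepFun ![X₁, X₂, X₃] P)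
    {s₁ s₂ s₃ : Set β} (hs₁ : MeasurableSet s₁) (hs₂ : MeasurableSet s₂)
    (hs₃ : MeasurableSet s₃) :
    P (X₁ ⁻¹' s₁ ∩ X₂ ⁻¹' s₂ ∩ X₃ ⁻¹' s₃) = P (X₁ ⁻¹' s₁) * P (X₂ ⁻¹' s₂) * P (X₃ ⁻¹' s₃) := by
  have := hind.measure_inter_preimage_eq_mul univ (sets := ![s₁, s₂, s₃])
    (by simp [Fin.forall_fin_succ, hs₁, hs₂, hs₃])
  have hset : ⋂ i, ![X₁, X₂, X₃] i ⁻¹' ![s₁, s₂, s₃] i = X₁ ⁻¹' s₁ ∩ X₂ ⁻¹' s₂ ∩ X₃ ⁻¹' s₃ := by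
    ext ω
    simp [Fin.forall_fin_succ, and_assoc]
  simpa [hset, Fin.prod_univ_three] using this

lemma measure_sum_three_mem_eq_sum [IsProbabilityMeasure P] {X₁ X₂ X₃ : Ω → ℝ}
    (h₁ : IsStPetersburg P X₁) (h₂ : IsStPetersburg P X₂) (h₃ : IsStPetersburg P X₃)
    (hind : iIndepFun ![X₁, X₂, X₃] P) {s : Set ℝ} (T : Finset (ℕ × ℕ × ℕ))
    (hT : ∀ a b c : ℕ, (2 : ℝ) ^ (a + 1) + 2 ^ (b + 1) + 2 ^ (c + 1) ∈ s ↔ (a, b, c) ∈ T) :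
    P {ω | X₁ ω + X₂ ω + X₃ ω ∈ s} = ∑ t ∈ T, 2⁻¹ ^ (t.1 + t.2.1 + t.2.2 + 3) := by
  set E : ℕ × ℕ × ℕ → Set Ω := fun t =>
    X₁ ⁻¹' {2 ^ (t.1 + 1)} ∩ X₂ ⁻¹' {2 ^ (t.2.1 + 1)} ∩ X₃ ⁻¹' {2 ^ (t.2.2 + 1)}
  have hae : {ω | X₁ ω + X₂ ω + X₃ ω ∈ s} =ᵐ[P] ⋃ t ∈ T, E t := by
    refine Filter.eventuallyEq_set.2 ?_
    filter_upwards [h₁.ae_exists_eq_two_pow_succ, h₂.ae_exists_eq_two_pow_succ,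
      h₃.ae_exists_eq_two_pow_succ] with ω ⟨a, ha⟩ ⟨b, hb⟩ ⟨c, hc⟩
    simp [E, ha, hb, hc, hT]
  have hdisj : (T : Set (ℕ × ℕ × ℕ)).PairwiseDisjoint E := by
    rintro ⟨a, b, c⟩ - ⟨a', b', c'⟩ - hne
    refine Set.disjoint_left.2 fun ω ⟨⟨ha, hb⟩, hc⟩ ⟨⟨ha', hb'⟩, hc'⟩ => hne ?_
    simp_all
  have hE : ∀ t, P (E t) = 2⁻¹ ^ (t.1 + t.2.1 + t.2.2 + 3) := fun t => by
    rw [hind.measure_inter_preimage_eq_mul_three (measurableSet_singleton _)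
      (measurableSet_singleton _) (measurableSet_singleton _), h₁.measure_preimage_two_pow_succ, h₂.measure_preimage_two_pow_succ, h₃.measure_preimage_two_pow_succ]
    ring
  rw [measure_congr hae, measure_biUnion_finset hdisj fun t _ =>
    ((h₁.measurableSet_preimage_two_pow _).inter (h₂.measurableSet_preimage_two_pow _)).inter
      (h₃.measurableSet_preimage_two_pow _)]
  exact sum_congr rfl fun t _ => hE t

def expTriplesSumLt24 : Finset (ℕ × ℕ × ℕ) :=
  (range 4 ×ˢ range 4 ×ˢ range 4).filter fun t =>
    2 ^ (t.1 + 1) + 2 ^ (t.2.1 + 1) + 2 ^ (t.2.2 + 1) < 24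

lemma mem_expTriplesSumLt24 {a b c : ℕ} :
    (a, b, c) ∈ expTriplesSumLt24 ↔ 2 ^ (a + 1) + 2 ^ (b + 1) + 2 ^ (c + 1) < 24 := by
  have hlt : ∀ k : ℕ, 2 ^ (k + 1) < 24 → k < 4 := fun k hk => by
    have : 2 ^ (k + 1) < 2 ^ 5 := by omega
    rw [Nat.pow_lt_pow_iff_right one_lt_two] at this
    omega
  simp only [expTriplesSumLt24, mem_filter, mem_product, mem_range, and_iff_right_iff_imp]
  have := Nat.two_pow_pos a; have := Nat.two_pow_pos b; have := Nat.two_pow_pos c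
  exact fun h => ⟨hlt a (by omega), hlt b (by omega), hlt c (by omega)⟩

lemma sum_expTriplesSumLt24 :
    ∑ t ∈ expTriplesSumLt24, (2⁻¹ : ℝ≥0∞) ^ (t.1 + t.2.1 + t.2.2 + 3) = 195 / 256 := by
  rw [← ENNReal.toReal_eq_toReal_iff' (ENNReal.sum_ne_top.2 fun _ _ => by finiteness)
      (by finiteness), ENNReal.toReal_sum fun _ _ => by finiteness]
  simp only [ENNReal.toReal_pow, ENNReal.toReal_inv, ENNReal.toReal_ofNat, ENNReal.toReal_div]
  norm_num [expTriplesSumLt24, sum_filter, sum_product, sum_range_succ]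

lemma measure_sum_three_mem_eq_195_div_256 [IsProbabilityMeasure P] {X₁ X₂ X₃ : Ω → ℝ}
    (h₁ : IsStPetersburg P X₁) (h₂ : IsStPetersburg P X₂) (h₃ : IsStPetersburg P X₃)
    (hind : iIndepFun ![X₁, X₂, X₃] P) {s : Set ℝ} (hs : ∀ n : ℕ, (n : ℝ) ∈ s ↔ n < 24) :
    P {ω | X₁ ω + X₂ ω + X₃ ω ∈ s} = 195 / 256 := by
  rw [measure_sum_three_mem_eq_sum h₁ h₂ h₃ hind expTriplesSumLt24 fun a b c => ?_,
    sum_expTriplesSumLt24]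
  rw [mem_expTriplesSumLt24, ← hs]
  push_cast
  rfl

theorem stmt_10 (P : Measure Ω) [IsProbabilityMeasure P]
    (X₁ X₂ X₃ : Ω → ℝ)
    (h₁ : IsStPetersburg P X₁) (h₂ : IsStPetersburg P X₂) (h₃ : IsStPetersburg P X₃)
    (hind : iIndepFun ![X₁, X₂, X₃] P) :
    P {ω | (X₁ ω + X₂ ω + X₃ ω) / 3 < 8} = 195 / 256 ∧
    P {ω | X₁ ω < 8} = 3 / 4 ∧
    ¬ (∀ x : ℝ, P {ω | (X₁ ω + X₂ ω + X₃ ω) / 3 ≤ x} ≤ P {ω | X₁ ω ≤ x}) := by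
  refine ⟨measure_sum_three_mem_eq_195_div_256 h₁ h₂ h₃ hind (s := {x | x / 3 < 8}) fun n => ?_,
    h₁.measure_preimage_eq_three_div_four (s := {x | x < 8}) fun n => ?_, fun hdom => ?_⟩
  · simp only [Set.mem_ofPred_eq, div_lt_iff₀ (three_pos : (0 : ℝ) < 3)]
    norm_cast
  · simp only [Set.mem_ofPred_eq]
    norm_cast
  have hmean : P {ω | (X₁ ω + X₂ ω + X₃ ω) / 3 ≤ 23 / 3} = 195 / 256 :=
    measure_sum_three_mem_eq_195_div_256 h₁ h₂ h₃ hind (s := {x | x / 3 ≤ 23 / 3}) fun n => by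
      simp only [Set.mem_ofPred_eq, div_le_div_iff_of_pos_right (three_pos : (0 : ℝ) < 3)]
      norm_cast
      omega
  have hX₁ : P {ω | X₁ ω ≤ 23 / 3} = 3 / 4 :=
    h₁.measure_preimage_eq_three_div_four (s := {x | x ≤ 23 / 3}) fun n => by
      simp only [Set.mem_ofPred_eq, le_div_iff₀ (three_pos : (0 : ℝ) < 3)]
      norm_cast
      omega
  have hle := hdom (23 / 3)
  rw [hmean, hX₁, ← ENNReal.toReal_le_toReal (by finiteness) (by finiteness)] at hle
  norm_num [ENNReal.toReal_div] at hle
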